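/- arXiv:1208.2210 — 3 statements merged into one kernel-verified Lean document; each statement's English description precedes it below -/
import Mathlib

section
/- For every natural number n, the number PD(n) of partitions of n with designated summands equals the number of pairs of partitions (α, β) with |α| + |β| = n, where α is an arbitrary partition and β is a partition all of whose parts are not congruent to 1 or 5 modulo 6. -/
open Finset

/-- The number of partitions of `n` with designated summands. -/
def PD (n : ℕ) : ℕ :=
  ∑ p : Nat.Partition n, ∏ k ∈ p.parts.toFinset, p.parts.count k

open PowerSeries

namespace PDaux

noncomputable section

/-- The power series whose `j`-th coefficient is `w (j/i)` when `i ∣ j`, and `0` otherwise. -/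
def wser (i : ℕ) (w : ℕ → ℚ) : PowerSeries ℚ :=
  PowerSeries.mk fun j => if i ∣ j then w (j / i) else 0

/-- Indicator series of multiples of `i`. -/
def mult (i : ℕ) : PowerSeries ℚ := wser i fun _ => 1

lemma coeff_mult (i j : ℕ) : coeff j (mult i) = if i ∣ j then 1 else 0 := by
  simp [mult, wser]

lemma mult_mul (i : ℕ) (hi : 0 < i) : mult i * (1 - X ^ i) = 1 := by
  have h : mult i * (1 - X ^ i) = mult i - mult i * X ^ i := by ring
  rw [h]
  ext k
  rw [map_sub, coeff_mult, coeff_mul_X_pow', coeff_one]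
  rcases Nat.eq_zero_or_pos k with rfl | hk
  · simp [Nat.not_le_of_lt hi]
  · rw [if_neg hk.ne']
    by_cases h : i ∣ k
    · rw [if_pos h, if_pos (Nat.le_of_dvd hk h), coeff_mult,
        if_pos (Nat.dvd_sub h dvd_rfl), sub_self]
    · rw [if_neg h]
      split_ifs with hik
      · rw [coeff_mult, if_neg, sub_zero]
        intro hd
        exact h (by simpa [Nat.sub_add_cancel hik] using Nat.dvd_add hd (dvd_refl i))
      · simp

/-- The weight for designated summands: multiplicity `0` contributes `1`, otherwise `m`. -/
def wPD (m : ℕ) : ℚ := if m = 0 then 1 else m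

lemma wser_wPD_mul (i : ℕ) (hi : 0 < i) :
    wser i wPD * (1 - X ^ i) = 1 - X ^ i + mult i * X ^ i := by
  have h : wser i wPD * (1 - X ^ i) = wser i wPD - wser i wPD * X ^ i := by ring
  rw [h]
  ext k
  rw [map_sub, map_add, map_sub, coeff_mul_X_pow', coeff_mul_X_pow', coeff_one, coeff_X_pow]
  simp only [wser, coeff_mk]
  by_cases h : i ∣ k
  · obtain ⟨m, rfl⟩ := h
    have e1 : i * m / i = m := Nat.mul_div_cancel_left m hi
    match m with
    | 0 => simp [wPD, Nat.not_le_of_lt hi, hi.ne', hi.ne]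
    | 1 =>
      have hik : i ≤ i * 1 := by omega
      rw [if_pos (Dvd.intro 1 rfl), if_pos hik, if_neg (by omega : ¬ i * 1 = 0),
        if_pos (by omega : i * 1 = i), e1]
      have : i * 1 - i = 0 := by omega
      rw [this, if_pos (dvd_zero i), coeff_mult, if_pos (dvd_zero i)]
      simp [wPD]
    | (m + 2) =>
      have hik : i ≤ i * (m + 2) := by nlinarith
      have hne : ¬ i * (m + 2) = 0 := by positivity
      have hnei : ¬ i * (m + 2) = i := by nlinarith
      have hd : i ∣ i * (m + 2) - i := Nat.dvd_sub (Dvd.intro _ rfl) dvd_rfl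
      have e2 : (i * (m + 2) - i) / i = m + 1 := by
        have : i * (m + 2) - i = i * (m + 1) := by ring_nf; omega
        rw [this, Nat.mul_div_cancel_left _ hi]
      rw [if_pos (Dvd.intro _ rfl), if_pos hik, if_neg hne, if_neg hnei, if_pos hd,
        coeff_mult, if_pos hd, if_pos hik, e1, e2]
      unfold wPD
      rw [if_neg (by omega), if_neg (by omega)]
      push_cast
      ring
  · have hk0 : ¬ k = 0 := by rintro rfl; exact h (dvd_zero i)
    have hki : ¬ k = i := by rintro rfl; exact h dvd_rfl
    rw [if_neg h, if_neg hk0, if_neg hki, coeff_mult]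
    by_cases hik : i ≤ k
    · have hnd : ¬ i ∣ k - i := fun hd =>
        h (by simpa [Nat.sub_add_cancel hik] using Nat.dvd_add hd (dvd_refl i))
      rw [if_pos hik, if_pos hik, if_neg hnd, if_neg hnd]
      ring
    · rw [if_neg hik, if_neg hik]
      ring

lemma key_identity (i : ℕ) (hi : 0 < i) :
    wser i wPD * ((1 - X ^ i) * (1 - X ^ (2 * i)) * (1 - X ^ (3 * i))) = 1 - X ^ (6 * i) := by
  have h1 := mult_mul i hi
  have h2 := wser_wPD_mul i hi
  have e2 : (X : PowerSeries ℚ) ^ (2 * i) = (X ^ i) ^ 2 := by rw [← pow_mul, mul_comm]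
  have e3 : (X : PowerSeries ℚ) ^ (3 * i) = (X ^ i) ^ 3 := by rw [← pow_mul, mul_comm]
  have e6 : (X : PowerSeries ℚ) ^ (6 * i) = (X ^ i) ^ 6 := by rw [← pow_mul, mul_comm]
  rw [e2, e3, e6]
  set y : PowerSeries ℚ := X ^ i with hy
  linear_combination ((1 - y ^ 2) * (1 - y ^ 3)) * h2 + (y * (1 + y) * (1 - y ^ 3)) * h1

theorem weightedGF (n : ℕ) (s : Finset ℕ) (hs : ∀ i ∈ s, 0 < i)
    (hcov : ∀ (p : n.Partition), ∀ j ∈ p.parts, j ∈ s) (w : ℕ → ℕ → ℚ) :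
    ∑ p : n.Partition, ∏ i ∈ s, w i (p.parts.count i)
      = coeff n (∏ i ∈ s, wser i (w i)) := by

  rw [coeff_prod]
  simp only [wser, coeff_mk]
  rw [← Finset.sum_filter_add_sum_filter_not (finsuppAntidiag s n)
    (fun l => ∀ i ∈ s, i ∣ l i)]
  have hzero : ∑ l ∈ (finsuppAntidiag s n).filter (fun l => ¬ ∀ i ∈ s, i ∣ l i),
      ∏ i ∈ s, (if i ∣ l i then w i (l i / i) else 0) = 0 := by
    apply Finset.sum_eq_zero
    intro l hl
    rw [mem_filter] at hl
    push_neg at hl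
    obtain ⟨i, hi, hnd⟩ := hl.2
    exact Finset.prod_eq_zero hi (if_neg hnd)
  rw [hzero, add_zero]
  set φ : n.Partition → (ℕ →₀ ℕ) := fun p =>
    { support := p.parts.toFinset
      toFun := fun i => p.parts.count i * i
      mem_support_toFun := fun a => by
        simp only [Multiset.mem_toFinset, ne_eq, mul_eq_zero, Multiset.count_eq_zero, not_or,
          not_not]
        constructor
        · intro ha
          exact ⟨ha, (p.parts_pos ha).ne'⟩
        · intro ha; exact ha.1 } with hφ
  have hφ_apply : ∀ (p : n.Partition) (i : ℕ), φ p i = p.parts.count i * i := fun p i => rfl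
  refine Finset.sum_bij' (fun p _ => φ p)
    (fun l hl => ⟨∑ i ∈ s, Multiset.replicate (l i / i) i, ?_, ?_⟩) ?_ ?_ ?_ ?_ ?_
  · -- parts positive
    intro i hi
    rw [Multiset.mem_sum] at hi
    obtain ⟨j, hj, hij⟩ := hi
    rw [Multiset.eq_of_mem_replicate hij]
    exact hs j hj
  · -- parts sum
    rw [mem_filter, mem_finsuppAntidiag] at hl
    simp_rw [Multiset.sum_sum, Multiset.sum_replicate, smul_eq_mul]
    rw [← hl.1.1]
    refine Finset.sum_congr rfl fun i hi => Nat.div_mul_cancel (hl.2 i hi)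
  · -- φ p ∈ filter
    intro p _
    rw [mem_filter, mem_finsuppAntidiag]
    refine ⟨⟨?_, ?_⟩, ?_⟩
    · simp_rw [hφ_apply]
      have h1 : p.parts.toFinset ⊆ s := fun i hi => hcov p i (Multiset.mem_toFinset.mp hi)
      have h2 := Finset.sum_multiset_count_of_subset p.parts s h1
      simp only [smul_eq_mul] at h2
      rw [← h2]
      exact p.parts_sum
    · intro i hi
      refine hcov p i (Multiset.mem_toFinset.mp ?_)
      simpa [hφ] using hi
    · intro i hi
      rw [hφ_apply]
      exact dvd_mul_left i _
  · -- ψ maps to univ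
    intro l hl
    exact Finset.mem_univ _
  · -- left inverse
    intro p _
    apply Nat.Partition.ext
    ext j
    simp only [hφ]
    rw [Multiset.count_sum']
    simp_rw [Multiset.count_replicate]
    rw [Finset.sum_ite_eq' s j]
    split_ifs with hjs
    · simp only [Finsupp.coe_mk]
      exact Nat.mul_div_cancel _ (hs j hjs)
    · symm
      rw [Multiset.count_eq_zero]
      exact fun hc => hjs (hcov p j hc)
  · -- right inverse
    intro l hl
    rw [mem_filter, mem_finsuppAntidiag] at hl
    ext i
    simp only [hφ, Finsupp.coe_mk]
    rw [Multiset.count_sum']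
    simp_rw [Multiset.count_replicate]
    rw [Finset.sum_ite_eq' s i]
    split_ifs with his
    · exact Nat.div_mul_cancel (hl.2 i his)
    · rw [zero_mul]
      symm
      rw [← Finsupp.notMem_support_iff]
      exact fun hc => his (hl.1.2 hc)
  · -- values agree
    intro p _
    refine Finset.prod_congr rfl fun i hi => ?_
    rw [hφ_apply, if_pos (dvd_mul_left i _), Nat.mul_div_cancel _ (hs i hi)]

lemma wser_eq_one (i : ℕ) (hi : 0 < i) (w : ℕ → ℚ) (h0 : w 0 = 1)
    (h : ∀ m, m ≠ 0 → w m = 0) : wser i w = 1 := by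
  ext k
  rw [coeff_one]
  simp only [wser, coeff_mk]
  rcases Nat.eq_zero_or_pos k with rfl | hk
  · simp [h0]
  · rw [if_neg hk.ne']
    by_cases hd : i ∣ k
    · rw [if_pos hd, h _ (Nat.div_pos (Nat.le_of_dvd hk hd) hi).ne']
    · rw [if_neg hd]

/-- The weight selecting partitions all of whose parts are ≢ 1, 5 mod 6. -/
def wQ (i m : ℕ) : ℚ := if i % 6 = 1 ∨ i % 6 = 5 then (if m = 0 then 1 else 0) else 1

lemma hs_Icc {n : ℕ} : ∀ i ∈ Icc 1 n, 0 < i := fun i hi => (mem_Icc.mp hi).1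

lemma cov_Icc {a n : ℕ} (ha : a ≤ n) (p : a.Partition) : ∀ j ∈ p.parts, j ∈ Icc 1 n :=
  fun j hj => mem_Icc.mpr ⟨p.parts_pos hj,
    le_trans (le_trans (Multiset.single_le_sum (fun _ _ => Nat.zero_le _) j hj)
      (le_of_eq p.parts_sum)) ha⟩

lemma card_partition_eq_coeff {a n : ℕ} (ha : a ≤ n) :
    (Fintype.card a.Partition : ℚ) = coeff a (∏ i ∈ Icc 1 n, mult i) := by
  have := weightedGF a (Icc 1 n) hs_Icc (fun p => cov_Icc ha p) (fun _ _ => 1)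
  simp only [Finset.prod_const_one] at this
  unfold mult
  rw [← this, Fintype.card, Finset.card_eq_sum_ones]
  push_cast
  rfl

lemma card_restricted_eq_coeff {b n : ℕ} (hb : b ≤ n) :
    ((((univ : Finset b.Partition).filter
        fun β => ∀ k ∈ β.parts, k % 6 ≠ 1 ∧ k % 6 ≠ 5).card : ℕ) : ℚ)
      = coeff b (∏ i ∈ Icc 1 n, wser i (wQ i)) := by
  have h := weightedGF b (Icc 1 n) hs_Icc (fun p => cov_Icc hb p) wQ
  rw [← h]
  rw [Finset.card_filter, Nat.cast_sum]
  simp only [Nat.cast_ite, Nat.cast_one, Nat.cast_zero]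
  refine Finset.sum_congr rfl fun p _ => ?_
  by_cases hp : ∀ k ∈ p.parts, k % 6 ≠ 1 ∧ k % 6 ≠ 5
  · rw [if_pos hp]
    refine (Finset.prod_eq_one fun i hi => ?_).symm
    unfold wQ
    by_cases hall : i % 6 = 1 ∨ i % 6 = 5
    · rw [if_pos hall, if_pos]
      rw [Multiset.count_eq_zero]
      intro hc
      rcases hall with h1 | h1 <;> [exact (hp i hc).1 h1; exact (hp i hc).2 h1]
    · rw [if_neg hall]
  · rw [if_neg hp]
    push_neg at hp
    obtain ⟨k, hk, hbad⟩ := hp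
    refine (Finset.prod_eq_zero (cov_Icc hb p k hk) ?_).symm
    unfold wQ
    have hk0 : p.parts.count k ≠ 0 := by rwa [ne_eq, Multiset.count_eq_zero, not_not]
    by_cases h1 : k % 6 = 1
    · rw [if_pos (Or.inl h1), if_neg hk0]
    · rw [if_pos (Or.inr (hbad h1)), if_neg hk0]

/-- `U` factor: `∏ (1-X^i)(1-X^(2i))(1-X^(3i))`. -/
def Uu (n : ℕ) : PowerSeries ℚ :=
  ∏ i ∈ Icc 1 n, ((1 - (X : PowerSeries ℚ) ^ i) * (1 - X ^ (2 * i)) * (1 - X ^ (3 * i)))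

/-- `V` factor: the inverse of `U`. -/
def Vv (n : ℕ) : PowerSeries ℚ :=
  ∏ i ∈ Icc 1 n, (mult i * mult (2 * i) * mult (3 * i))

/-- Product of `1 - X^j` over multiples of `k` in `[1, n]`. -/
def M (n k : ℕ) : PowerSeries ℚ :=
  ∏ j ∈ (Icc 1 n).filter (fun j => k ∣ j), (1 - (X : PowerSeries ℚ) ^ j)

/-- Product of the high-order factors. -/
def Uk (n k : ℕ) : PowerSeries ℚ :=
  ∏ i ∈ (Icc 1 n).filter (fun i => ¬ k * i ≤ n), (1 - (X : PowerSeries ℚ) ^ (k * i))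

/-- Product of `1 - X^j` over the allowed residues. -/
def Aset (n : ℕ) : Finset ℕ := (Icc 1 n).filter (fun j => ¬ (j % 6 = 1 ∨ j % 6 = 5))

lemma UV_eq_one (n : ℕ) : Uu n * Vv n = 1 := by
  rw [Uu, Vv, ← Finset.prod_mul_distrib]
  refine Finset.prod_eq_one fun i hi => ?_
  have hi1 : 0 < i := hs_Icc i hi
  have h1 := mult_mul i hi1
  have h2 := mult_mul (2 * i) (by omega)
  have h3 := mult_mul (3 * i) (by omega)
  rw [show (1 - (X : PowerSeries ℚ) ^ i) * (1 - X ^ (2 * i)) * (1 - X ^ (3 * i)) *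
      (mult i * mult (2 * i) * mult (3 * i)) =
      (mult i * (1 - X ^ i)) * ((mult (2 * i) * (1 - X ^ (2 * i))) *
        (mult (3 * i) * (1 - X ^ (3 * i)))) from by ring, h1, h2, h3]
  norm_num

lemma FU_eq (n : ℕ) :
    (∏ i ∈ Icc 1 n, wser i wPD) * Uu n = ∏ i ∈ Icc 1 n, (1 - (X : PowerSeries ℚ) ^ (6 * i)) := by
  rw [Uu, ← Finset.prod_mul_distrib]
  exact Finset.prod_congr rfl fun i hi => key_identity i (hs_Icc i hi)

lemma U_split (n : ℕ) :
    Uu n = (∏ i ∈ Icc 1 n, (1 - (X : PowerSeries ℚ) ^ i)) *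
      (∏ i ∈ Icc 1 n, (1 - (X : PowerSeries ℚ) ^ (2 * i))) *
        ∏ i ∈ Icc 1 n, (1 - (X : PowerSeries ℚ) ^ (3 * i)) := by
  rw [Uu, ← Finset.prod_mul_distrib, ← Finset.prod_mul_distrib]

lemma prod_split (n k : ℕ) (hk : 0 < k) :
    ∏ i ∈ Icc 1 n, (1 - (X : PowerSeries ℚ) ^ (k * i)) = M n k * Uk n k := by
  rw [M, Uk, ← Finset.prod_filter_mul_prod_filter_not (Icc 1 n) (fun i => k * i ≤ n)]
  congr 1
  refine Finset.prod_nbij' (fun i => k * i) (fun j => j / k) ?_ ?_ ?_ ?_ ?_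
  · intro a ha
    rw [mem_filter, mem_Icc] at ha ⊢
    obtain ⟨⟨h1, _⟩, h3⟩ := ha
    exact ⟨⟨Nat.one_le_iff_ne_zero.mpr (by positivity), h3⟩, Dvd.intro _ rfl⟩
  · intro j hj
    rw [mem_filter, mem_Icc] at hj ⊢
    obtain ⟨⟨h1, h2⟩, h3⟩ := hj
    obtain ⟨c, rfl⟩ := h3
    rw [Nat.mul_div_cancel_left _ hk]
    have hc : 0 < c := by
      rcases Nat.eq_zero_or_pos c with rfl | hc
      · omega
      · exact hc
    refine ⟨⟨hc, le_trans (Nat.le_mul_of_pos_left c hk) h2⟩, h2⟩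
  · intro a _
    exact Nat.mul_div_cancel_left a hk
  · intro j hj
    rw [mem_filter] at hj
    exact Nat.mul_div_cancel' hj.2
  · intro a _
    rfl

lemma coeff_trunc (n k : ℕ) (z : PowerSeries ℚ) :
    coeff n (z * Uk n k) = coeff n z := by
  rw [Uk]
  refine coeff_mul_prod_one_sub_of_lt_order n _ z _ fun i hi => ?_
  rw [order_X_pow]
  rw [mem_filter] at hi
  exact_mod_cast Nat.lt_of_not_le hi.2

lemma M_mul_M (n : ℕ) :
    M n 2 * M n 3 = M n 6 * ∏ j ∈ Aset n, (1 - (X : PowerSeries ℚ) ^ j) := by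
  rw [M, M, M, Aset, ← Finset.prod_union_inter]
  have hu : (Icc 1 n).filter (fun j => 2 ∣ j) ∪ (Icc 1 n).filter (fun j => 3 ∣ j) =
      (Icc 1 n).filter (fun j => ¬ (j % 6 = 1 ∨ j % 6 = 5)) := by
    ext j
    simp only [mem_union, mem_filter, mem_Icc]
    omega
  have hi : (Icc 1 n).filter (fun j => 2 ∣ j) ∩ (Icc 1 n).filter (fun j => 3 ∣ j) =
      (Icc 1 n).filter (fun j => 6 ∣ j) := by
    ext j
    simp only [mem_inter, mem_filter, mem_Icc]
    omega
  rw [hu, hi, mul_comm]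

lemma Q_eq (n : ℕ) : ∏ i ∈ Icc 1 n, wser i (wQ i) = ∏ i ∈ Aset n, mult i := by
  rw [Aset, Finset.prod_filter]
  refine Finset.prod_congr rfl fun i hi => ?_
  by_cases h : i % 6 = 1 ∨ i % 6 = 5
  · rw [if_neg (not_not_intro h)]
    exact wser_eq_one i (hs_Icc i hi) _ (by simp [wQ, h]) (fun m hm => by simp [wQ, h, hm])
  · rw [if_pos h]
    have hw : wQ i = fun _ => (1 : ℚ) := by
      funext m
      simp [wQ, h]
    rw [mult, hw]

lemma prod_mult_mul (t : Finset ℕ) (ht : ∀ i ∈ t, 0 < i) :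
    (∏ i ∈ t, mult i) * (∏ i ∈ t, (1 - (X : PowerSeries ℚ) ^ i)) = 1 := by
  rw [← Finset.prod_mul_distrib]
  exact Finset.prod_eq_one fun i hi => mult_mul i (ht i hi)

lemma coeff_left (n : ℕ) :
    coeff n (∏ i ∈ Icc 1 n, wser i wPD) = coeff n (M n 6 * Vv n) := by
  have e : (∏ i ∈ Icc 1 n, wser i wPD) * (Uu n * Vv n) = (M n 6 * Vv n) * Uk n 6 := by
    have h1 : (∏ i ∈ Icc 1 n, wser i wPD) * Uu n = M n 6 * Uk n 6 :=
      (FU_eq n).trans (prod_split n 6 (by norm_num))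
    calc (∏ i ∈ Icc 1 n, wser i wPD) * (Uu n * Vv n)
        = ((∏ i ∈ Icc 1 n, wser i wPD) * Uu n) * Vv n := by ring
      _ = (M n 6 * Uk n 6) * Vv n := by rw [h1]
      _ = (M n 6 * Vv n) * Uk n 6 := by ring
  calc coeff n (∏ i ∈ Icc 1 n, wser i wPD)
      = coeff n ((∏ i ∈ Icc 1 n, wser i wPD) * (Uu n * Vv n)) := by
        rw [UV_eq_one, mul_one]
    _ = coeff n ((M n 6 * Vv n) * Uk n 6) := by rw [e]
    _ = coeff n (M n 6 * Vv n) := coeff_trunc n 6 _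

lemma coeff_right (n : ℕ) :
    coeff n ((∏ i ∈ Icc 1 n, mult i) * ∏ i ∈ Icc 1 n, wser i (wQ i)) =
      coeff n (M n 6 * Vv n) := by
  have hPW : (∏ i ∈ Icc 1 n, mult i) * (∏ i ∈ Icc 1 n, (1 - (X : PowerSeries ℚ) ^ i)) = 1 :=
    prod_mult_mul _ hs_Icc
  have hQW : (∏ i ∈ Icc 1 n, wser i (wQ i)) * (∏ j ∈ Aset n, (1 - (X : PowerSeries ℚ) ^ j)) = 1 := by
    rw [Q_eq]
    exact prod_mult_mul _ fun i hi => hs_Icc i (mem_of_mem_filter i (by rwa [Aset] at hi))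
  have e : ((∏ i ∈ Icc 1 n, mult i) * ∏ i ∈ Icc 1 n, wser i (wQ i)) * (Uu n * Vv n) =
      ((M n 6 * Vv n) * Uk n 2) * Uk n 3 := by
    calc ((∏ i ∈ Icc 1 n, mult i) * ∏ i ∈ Icc 1 n, wser i (wQ i)) * (Uu n * Vv n)
        = ((∏ i ∈ Icc 1 n, mult i) * (∏ i ∈ Icc 1 n, (1 - (X : PowerSeries ℚ) ^ i))) *
            ((∏ i ∈ Icc 1 n, wser i (wQ i)) *
              (∏ i ∈ Icc 1 n, (1 - (X : PowerSeries ℚ) ^ (2 * i))) *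
              (∏ i ∈ Icc 1 n, (1 - (X : PowerSeries ℚ) ^ (3 * i))) * Vv n) := by
          rw [U_split]; ring
      _ = (∏ i ∈ Icc 1 n, wser i (wQ i)) * (M n 2 * Uk n 2) * (M n 3 * Uk n 3) * Vv n := by
          rw [hPW, prod_split n 2 (by norm_num), prod_split n 3 (by norm_num)]; ring
      _ = ((∏ i ∈ Icc 1 n, wser i (wQ i)) * (∏ j ∈ Aset n, (1 - (X : PowerSeries ℚ) ^ j))) *
            (M n 6 * Vv n) * Uk n 2 * Uk n 3 := by
          rw [show (∏ i ∈ Icc 1 n, wser i (wQ i)) * (M n 2 * Uk n 2) * (M n 3 * Uk n 3) * Vv n =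
            (∏ i ∈ Icc 1 n, wser i (wQ i)) * (M n 2 * M n 3) * Vv n * Uk n 2 * Uk n 3 from by
              ring, M_mul_M]
          ring
      _ = ((M n 6 * Vv n) * Uk n 2) * Uk n 3 := by rw [hQW]; ring
  calc coeff n ((∏ i ∈ Icc 1 n, mult i) * ∏ i ∈ Icc 1 n, wser i (wQ i))
      = coeff n (((∏ i ∈ Icc 1 n, mult i) * ∏ i ∈ Icc 1 n, wser i (wQ i)) * (Uu n * Vv n)) := by
        rw [UV_eq_one, mul_one]
    _ = coeff n (((M n 6 * Vv n) * Uk n 2) * Uk n 3) := by rw [e]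
    _ = coeff n ((M n 6 * Vv n) * Uk n 2) := coeff_trunc n 3 _
    _ = coeff n (M n 6 * Vv n) := coeff_trunc n 2 _

end

end PDaux

open PDaux in
/-- `PD n` equals the number of pairs `(α, β)` of partitions with `|α| + |β| = n`,
where `α` is arbitrary and all parts of `β` are not congruent to `1` or `5` mod `6`. -/
theorem PD_eq_card_pairs (n : ℕ) :
    PD n =
      ∑ a ∈ Finset.range (n + 1),
        Fintype.card (Nat.Partition a) *
          ((Finset.univ : Finset (Nat.Partition (n - a))).filter
            (fun β => ∀ k ∈ β.parts, k % 6 ≠ 1 ∧ k % 6 ≠ 5)).card := by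
  have hPD : (PD n : ℚ) = ∑ p : n.Partition, ∏ i ∈ Icc 1 n, wPD (p.parts.count i) := by
    rw [PD]
    push_cast
    refine Finset.sum_congr rfl fun p _ => ?_
    rw [← Finset.prod_subset (fun k hk => cov_Icc le_rfl p k (Multiset.mem_toFinset.mp hk))
        (fun x _ hx => show wPD (p.parts.count x) = 1 from by
          rw [Multiset.count_eq_zero.mpr fun hc => hx (Multiset.mem_toFinset.mpr hc)]
          simp [wPD])]
    refine Finset.prod_congr rfl fun k hk => ?_
    simp only [wPD]
    rw [if_neg (by rw [Multiset.count_eq_zero, not_not, ← Multiset.mem_toFinset]; exact hk)]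
  have key : (PD n : ℚ) = ∑ a ∈ Finset.range (n + 1),
      (Fintype.card (Nat.Partition a) : ℚ) *
        (((Finset.univ : Finset (Nat.Partition (n - a))).filter
          (fun β => ∀ k ∈ β.parts, k % 6 ≠ 1 ∧ k % 6 ≠ 5)).card : ℚ) := by
    calc (PD n : ℚ)
        = ∑ p : n.Partition, ∏ i ∈ Icc 1 n, wPD (p.parts.count i) := hPD
      _ = PowerSeries.coeff n (∏ i ∈ Icc 1 n, wser i wPD) :=
          weightedGF n _ hs_Icc (fun p => cov_Icc le_rfl p) fun _ => wPD
      _ = PowerSeries.coeff n (M n 6 * Vv n) := coeff_left n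
      _ = PowerSeries.coeff n ((∏ i ∈ Icc 1 n, mult i) * ∏ i ∈ Icc 1 n, wser i (wQ i)) :=
          (coeff_right n).symm
      _ = ∑ ab ∈ Finset.HasAntidiagonal.antidiagonal n,
            PowerSeries.coeff ab.1 (∏ i ∈ Icc 1 n, mult i) *
              PowerSeries.coeff ab.2 (∏ i ∈ Icc 1 n, wser i (wQ i)) :=
          PowerSeries.coeff_mul n _ _
      _ = ∑ a ∈ Finset.range (n + 1),
            PowerSeries.coeff a (∏ i ∈ Icc 1 n, mult i) *
              PowerSeries.coeff (n - a) (∏ i ∈ Icc 1 n, wser i (wQ i)) :=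
          Finset.Nat.sum_antidiagonal_eq_sum_range_succ_mk _ n
      _ = ∑ a ∈ Finset.range (n + 1),
            (Fintype.card (Nat.Partition a) : ℚ) *
              (((Finset.univ : Finset (Nat.Partition (n - a))).filter
                (fun β => ∀ k ∈ β.parts, k % 6 ≠ 1 ∧ k % 6 ≠ 5)).card : ℚ) := by
          refine Finset.sum_congr rfl fun a ha => ?_
          rw [mem_range] at ha
          rw [← card_partition_eq_coeff (by omega : a ≤ n),
            ← card_restricted_eq_coeff (by omega : n - a ≤ n)]
  exact_mod_cast key
end

section
/- (MacMahon) For every natural number n, the number of partitions of n into parts not congruent to 1 or 5 modulo 6 equals the number of partitions of n in which no part occurs exactly once (i.e., every part size that occurs has multiplicity at least 2). -/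
open Finset

open PowerSeries

namespace Theorems100

noncomputable section

variable {α : Type*}

open Finset

open scoped Classical

/-- The partial product for the generating function for odd partitions.
TODO: As `m` tends to infinity, this converges (in the `X`-adic topology).

If `m` is sufficiently large, the `i`th coefficient gives the number of odd partitions of the
natural number `i`: proved in `oddGF_prop`.
It is stated for an arbitrary field `α`, though it usually suffices to use `ℚ` or `ℝ`.
-/
def partialOddGF (m : ℕ) [Field α] :=
  ∏ i ∈ range m, (1 - (X : PowerSeries α) ^ (2 * i + 1))⁻¹

/-- The partial product for the generating function for distinct partitions.
TODO: As `m` tends to infinity, this converges (in the `X`-adic topology).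

If `m` is sufficiently large, the `i`th coefficient gives the number of distinct partitions of the
natural number `i`: proved in `distinctGF_prop`.
It is stated for an arbitrary commutative semiring `α`, though it usually suffices to use `ℕ`, `ℚ`
or `ℝ`.
-/
def partialDistinctGF (m : ℕ) [CommSemiring α] :=
  ∏ i ∈ range m, (1 + (X : PowerSeries α) ^ (i + 1))

open Finset.HasAntidiagonal

universe u
variable {ι : Type u}

/-- A convenience constructor for the power series whose coefficients indicate a subset. -/
def indicatorSeries (α : Type*) [Semiring α] (s : Set ℕ) : PowerSeries α :=
  PowerSeries.mk fun n => if n ∈ s then 1 else 0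

theorem coeff_indicator (s : Set ℕ) [Semiring α] (n : ℕ) :
    coeff (R := α) n (indicatorSeries _ s) = if n ∈ s then 1 else 0 :=
  coeff_mk _ _

theorem coeff_indicator_pos (s : Set ℕ) [Semiring α] (n : ℕ) (h : n ∈ s) :
    coeff (R := α) n (indicatorSeries _ s) = 1 := by rw [coeff_indicator, if_pos h]

theorem coeff_indicator_neg (s : Set ℕ) [Semiring α] (n : ℕ) (h : n ∉ s) :
    coeff (R := α) n (indicatorSeries _ s) = 0 := by rw [coeff_indicator, if_neg h]

theorem constantCoeff_indicator (s : Set ℕ) [Semiring α] :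
    constantCoeff (R := α) (indicatorSeries _ s) = if 0 ∈ s then 1 else 0 :=
  rfl

theorem two_series (i : ℕ) [Semiring α] :
    1 + (X : PowerSeries α) ^ i.succ = indicatorSeries α {0, i.succ} := by
  ext n
  simp only [coeff_indicator, coeff_one, coeff_X_pow, Set.mem_insert_iff, Set.mem_singleton_iff,
    map_add]
  cases' n with d
  · simp [(Nat.succ_ne_zero i).symm]
  · simp [Nat.succ_ne_zero d]

theorem num_series' [Field α] (i : ℕ) :
    (1 - (X : PowerSeries α) ^ (i + 1))⁻¹ = indicatorSeries α {k | i + 1 ∣ k} := by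
  rw [PowerSeries.inv_eq_iff_mul_eq_one]
  · ext n
    cases n with
    | zero => simp [mul_sub, zero_pow, constantCoeff_indicator]
    | succ n =>
      simp only [coeff_one, if_false, mul_sub, mul_one, coeff_indicator,
        LinearMap.map_sub, reduceCtorEq]
      simp_rw [coeff_mul, coeff_X_pow, coeff_indicator, @boole_mul _ _ _ _]
      simp only [Set.mem_setOf_eq]
      erw [sum_ite, sum_ite]
      simp_rw [@filter_filter _ _ _ _ _, sum_const_zero, add_zero, sum_const, nsmul_eq_mul, mul_one,
        sub_eq_iff_eq_add, zero_add]
      symm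
      split_ifs with h
      · suffices #{a ∈ antidiagonal (n + 1) | i + 1 ∣ a.fst ∧ a.snd = i + 1} = 1 by
          convert congr_arg ((↑) : ℕ → α) this; norm_cast
        rw [card_eq_one]
        cases' h with p hp
        refine ⟨((i + 1) * (p - 1), i + 1), ?_⟩
        ext ⟨a₁, a₂⟩
        simp only [mem_filter, Prod.mk_inj, HasAntidiagonal.mem_antidiagonal, mem_singleton]
        constructor
        · rintro ⟨a_left, ⟨a, rfl⟩, rfl⟩
          refine ⟨?_, rfl⟩
          rw [Nat.mul_sub_left_distrib, ← hp, ← a_left, mul_one, Nat.add_sub_cancel]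
        · rintro ⟨rfl, rfl⟩
          match p with
          | 0 => rw [mul_zero] at hp; cases hp
          | p + 1 => rw [hp]; simp [mul_add]
      · suffices #{a ∈ antidiagonal (n + 1) | i + 1 ∣ a.fst ∧ a.snd = i + 1} = 0 by
          convert congr_arg ((↑) : ℕ → α) this; norm_cast
        rw [card_eq_zero]
        apply eq_empty_of_forall_notMem
        simp only [Prod.forall, mem_filter, not_and, HasAntidiagonal.mem_antidiagonal]
        rintro _ h₁ h₂ ⟨a, rfl⟩ rfl
        apply h
        simp [← h₂]
  · simp [zero_pow]

def mkOdd : ℕ ↪ ℕ :=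
  ⟨fun i => 2 * i + 1, fun x y h => by linarith⟩

-- The main workhorse of the partition theorem proof.
theorem partialGF_prop (α : Type*) [CommSemiring α] (n : ℕ) (s : Finset ℕ) (hs : ∀ i ∈ s, 0 < i)
    (c : ℕ → Set ℕ) (hc : ∀ i, i ∉ s → 0 ∈ c i) :
    #{p : n.Partition | (∀ j, p.parts.count j ∈ c j) ∧ ∀ j ∈ p.parts, j ∈ s} =
      coeff n (∏ i ∈ s, indicatorSeries α ((· * i) '' c i)) := by
  simp_rw [coeff_prod, coeff_indicator, prod_boole, sum_boole]
  apply congr_arg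
  simp only [mem_univ, forall_true_left, not_and, not_forall, exists_prop,
    Set.mem_image, not_exists]
  set φ : (a : Nat.Partition n) →
    a ∈ filter (fun p ↦ (∀ (j : ℕ), Multiset.count j p.parts ∈ c j) ∧ ∀ j ∈ p.parts, j ∈ s) univ →
    ℕ →₀ ℕ := fun p _ => {
      toFun := fun i => Multiset.count i p.parts • i
      support := Finset.filter (fun i => i ≠ 0) p.parts.toFinset
      mem_support_toFun := fun a => by
        simp only [smul_eq_mul, ne_eq, mul_eq_zero, Multiset.count_eq_zero]
        rw [not_or, not_not]
        simp only [Multiset.mem_toFinset, not_not, mem_filter] }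
  refine Finset.card_bij φ ?_ ?_ ?_
  · intro a ha
    simp only [φ, not_forall, not_exists, not_and, exists_prop, mem_filter]
    rw [mem_finsuppAntidiag]
    dsimp only [ne_eq, smul_eq_mul, id_eq, eq_mpr_eq_cast, le_eq_subset, Finsupp.coe_mk]
    simp only [mem_univ, forall_true_left, not_and, not_forall, exists_prop,
      mem_filter, true_and] at ha
    refine ⟨⟨?_, fun i ↦ ?_⟩, fun i _ ↦ ⟨a.parts.count i, ha.1 i, rfl⟩⟩
    · conv_rhs => simp [← a.parts_sum]
      rw [sum_multiset_count_of_subset _ s]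
      · simp only [smul_eq_mul]
      · intro i
        simp only [Multiset.mem_toFinset, not_not, mem_filter]
        apply ha.2
    · simp only [ne_eq, Multiset.mem_toFinset, not_not, mem_filter, and_imp]
      exact fun hi _ ↦ ha.2 i hi
  · intro p₁ hp₁ p₂ hp₂ h
    apply Nat.Partition.ext
    simp only [true_and, mem_univ, mem_filter] at hp₁ hp₂
    ext i
    simp only [φ, ne_eq, Multiset.mem_toFinset, not_not, smul_eq_mul, Finsupp.mk.injEq] at h
    by_cases hi : i = 0
    · rw [hi]
      rw [Multiset.count_eq_zero_of_notMem]
      · rw [Multiset.count_eq_zero_of_notMem]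
        intro a; exact Nat.lt_irrefl 0 (hs 0 (hp₂.2 0 a))
      intro a; exact Nat.lt_irrefl 0 (hs 0 (hp₁.2 0 a))
    · rw [← mul_left_inj' hi]
      rw [funext_iff] at h
      exact h.2 i
  · simp only [φ, mem_filter, mem_finsuppAntidiag, mem_univ, exists_prop, true_and, and_assoc]
    rintro f ⟨hf, hf₃, hf₄⟩
    have hf' : f ∈ finsuppAntidiag s n := mem_finsuppAntidiag.mpr ⟨hf, hf₃⟩
    simp only [mem_finsuppAntidiag] at hf'
    refine ⟨⟨∑ i ∈ s, Multiset.replicate (f i / i) i, ?_, ?_⟩, ?_, ?_, ?_⟩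
    · intro i hi
      simp only [exists_prop, Multiset.mem_sum, mem_map, Function.Embedding.coeFn_mk] at hi
      rcases hi with ⟨t, ht, z⟩
      apply hs
      rwa [Multiset.eq_of_mem_replicate z]
    · simp_rw [Multiset.sum_sum, Multiset.sum_replicate, Nat.nsmul_eq_mul]
      rw [← hf'.1]
      refine sum_congr rfl fun i hi => Nat.div_mul_cancel ?_
      rcases hf₄ i hi with ⟨w, _, hw₂⟩
      rw [← hw₂]
      exact dvd_mul_left _ _
    · intro i
      simp_rw [Multiset.count_sum', Multiset.count_replicate, sum_ite_eq']
      split_ifs with h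
      · rcases hf₄ i h with ⟨w, hw₁, hw₂⟩
        rwa [← hw₂, Nat.mul_div_cancel _ (hs i h)]
      · exact hc _ h
    · intro i hi
      rw [Multiset.mem_sum] at hi
      rcases hi with ⟨j, hj₁, hj₂⟩
      rwa [Multiset.eq_of_mem_replicate hj₂]
    · ext i
      simp_rw [Multiset.count_sum', Multiset.count_replicate, sum_ite_eq']
      simp only [ne_eq, Multiset.mem_toFinset, not_not, smul_eq_mul, ite_mul,
        zero_mul, Finsupp.coe_mk]
      split_ifs with h
      · apply Nat.div_mul_cancel
        rcases hf₄ i h with ⟨w, _, hw₂⟩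
        apply Dvd.intro_left _ hw₂
      · apply symm
        rw [← Finsupp.notMem_support_iff]
        exact notMem_mono hf'.2 h

end
end Theorems100
noncomputable section MacMahonAux
open Theorems100

open PowerSeries Finset
variable {α : Type*}

/-- allowed multiplicities: 0 or at least 2 -/
def C2 : Set ℕ := {0} ∪ {a | 2 ≤ a}

lemma mem_C2 (a : ℕ) : a ∈ C2 ↔ a ≠ 1 := by
  simp only [C2, Set.mem_union, Set.mem_singleton_iff, Set.mem_setOf_eq]
  omega

lemma mem_image_C2 (j k : ℕ) : k ∈ (· * (j+1)) '' C2 ↔ ((j+1) ∣ k ∧ k ≠ j+1) := by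
  constructor
  · rintro ⟨a, ha, rfl⟩
    rw [mem_C2] at ha
    exact ⟨Dvd.intro_left _ rfl, by intro h; apply ha; nlinarith [h]⟩
  · rintro ⟨⟨a, rfl⟩, hne⟩
    exact ⟨a, (mem_C2 a).2 (by rintro rfl; simp at hne), mul_comm _ _⟩

theorem series_A [Field α] (j : ℕ) :
    indicatorSeries α ((· * (j+1)) '' C2) = (1 - (X : PowerSeries α) ^ (j+1))⁻¹ - X ^ (j+1) := by
  rw [num_series']
  ext k
  simp only [map_sub, coeff_indicator, coeff_X_pow, Set.mem_setOf_eq]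
  by_cases h1 : (j+1) ∣ k
  · by_cases h2 : k = j + 1
    · rw [if_neg (by rw [mem_image_C2]; tauto), if_pos h1, if_pos h2]; ring
    · rw [if_pos (by rw [mem_image_C2]; exact ⟨h1, h2⟩), if_pos h1, if_neg h2]; ring
  · have h2 : k ≠ j + 1 := by rintro rfl; exact h1 dvd_rfl
    rw [if_neg (by rw [mem_image_C2]; tauto), if_neg h1, if_neg h2]; ring
theorem series_B [Field α] (j : ℕ) :
    (1 - (X : PowerSeries α) ^ (j+1))⁻¹ - X ^ (j+1)
      = (1 - X ^ (6*(j+1))) * ((1 - X ^ (2*(j+1)))⁻¹ * (1 - X ^ (3*(j+1)))⁻¹) := by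
  set Y : PowerSeries α := X ^ (j+1) with hY
  have e2 : (X : PowerSeries α) ^ (2*(j+1)) = Y^2 := by rw [hY, ← pow_mul, mul_comm]
  have e3 : (X : PowerSeries α) ^ (3*(j+1)) = Y^3 := by rw [hY, ← pow_mul, mul_comm]
  have e6 : (X : PowerSeries α) ^ (6*(j+1)) = Y^6 := by rw [hY, ← pow_mul, mul_comm]
  rw [e2, e3, e6]
  have hcY : constantCoeff Y = 0 := by
    rw [hY, map_pow, constantCoeff_X, zero_pow (Nat.succ_ne_zero j)]
  have hc : ∀ r : ℕ, r ≠ 0 → constantCoeff (1 - Y^r) = 1 := by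
    intro r hr
    rw [map_sub, map_pow, hcY, zero_pow hr, map_one, sub_zero]
  have h1 : (1 - Y)⁻¹ * (1 - Y) = 1 := by
    apply PowerSeries.inv_mul_cancel
    rw [show (1 - Y) = 1 - Y^1 by ring]; rw [hc 1 one_ne_zero]; exact one_ne_zero
  have h2 : (1 - Y^2)⁻¹ * (1 - Y^2) = 1 := by
    apply PowerSeries.inv_mul_cancel; rw [hc 2 (by norm_num)]; exact one_ne_zero
  have h3 : (1 - Y^3)⁻¹ * (1 - Y^3) = 1 := by
    apply PowerSeries.inv_mul_cancel; rw [hc 3 (by norm_num)]; exact one_ne_zero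
  have hcne : (1 - Y^2) * (1 - Y^3) ≠ 0 := by
    intro h
    have := congrArg (constantCoeff (R := α)) h
    rw [map_mul, hc 2 (by norm_num), hc 3 (by norm_num), map_zero] at this
    simp at this
  apply mul_right_cancel₀ hcne
  calc ((1 - Y)⁻¹ - Y) * ((1 - Y^2) * (1 - Y^3))
      = (1 - Y)⁻¹ * (1 - Y) * ((1 + Y) * (1 - Y^3)) - Y * ((1 - Y^2) * (1 - Y^3)) := by ring
    _ = (1 + Y) * (1 - Y^3) - Y * ((1 - Y^2) * (1 - Y^3)) := by rw [h1, one_mul]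
    _ = 1 - Y^6 := by ring
    _ = (1 - Y^6) * (((1 - Y^2)⁻¹ * (1 - Y^2)) * ((1 - Y^3)⁻¹ * (1 - Y^3))) := by
        rw [h2, h3]; ring
    _ = (1 - Y^6) * ((1 - Y^2)⁻¹ * (1 - Y^3)⁻¹) * ((1 - Y^2) * (1 - Y^3)) := by ring

theorem F_eq [Field α] (i : ℕ) (hi : 0 < i) :
    indicatorSeries α ((· * i) '' C2)
      = (1 - X ^ (6*i)) * ((1 - X ^ (2*i))⁻¹ * (1 - X ^ (3*i))⁻¹) := by
  obtain ⟨j, rfl⟩ : ∃ j, i = j + 1 := ⟨i - 1, by omega⟩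
  rw [series_A, series_B]
theorem prod_even_part [Field α] (t : ℕ) :
    (∏ i ∈ (Ioc 0 (2*t)).filter (fun j => 2 ∣ j), (1 - (X : PowerSeries α) ^ (3*i))⁻¹)
      = ∏ j ∈ Ioc 0 t, (1 - (X : PowerSeries α) ^ (6*j))⁻¹ := by
  refine (Finset.prod_bij' (fun j _ => 2*j) (fun i _ => i/2) ?_ ?_ ?_ ?_ ?_).symm
  · intro j hj
    rw [mem_Ioc] at hj
    rw [mem_filter, mem_Ioc]
    exact ⟨⟨by omega, by omega⟩, ⟨j, rfl⟩⟩
  · intro i hi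
    rw [mem_filter, mem_Ioc] at hi
    obtain ⟨⟨h1, h2⟩, c, rfl⟩ := hi
    rw [mem_Ioc]
    omega
  · intro j hj
    omega
  · intro i hi
    rw [mem_filter, mem_Ioc] at hi
    obtain ⟨⟨h1, h2⟩, c, rfl⟩ := hi
    omega
  · intro j hj
    rw [show 3*(2*j) = 6*j by ring]

theorem same_gf_mac [Field α] (t : ℕ) :
    (∏ i ∈ Ioc 0 (2*t), indicatorSeries α ((· * i) '' C2)) =
      ((∏ i ∈ Ioc 0 (2*t), (1 - (X : PowerSeries α) ^ (2*i))⁻¹) *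
        (∏ i ∈ (Ioc 0 (2*t)).filter (fun j => ¬ 2 ∣ j), (1 - (X : PowerSeries α) ^ (3*i))⁻¹)) *
      (∏ i ∈ Ioc t (2*t), (1 - (X : PowerSeries α) ^ (6*i))) := by
  rw [Finset.prod_congr rfl (fun i hi => F_eq i (mem_Ioc.mp hi).1), Finset.prod_mul_distrib,
    Finset.prod_mul_distrib]
  rw [← Finset.prod_filter_mul_prod_filter_not (Ioc 0 (2*t)) (fun j => 2 ∣ j)
    (fun i => (1 - (X : PowerSeries α) ^ (3*i))⁻¹)]
  rw [prod_even_part]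
  rw [← Finset.prod_Ioc_consecutive (fun i => 1 - (X : PowerSeries α) ^ (6*i))
    (Nat.zero_le t) (by omega : t ≤ 2*t)]
  have hcancel : (∏ j ∈ Ioc 0 t, (1 - (X : PowerSeries α) ^ (6*j))) *
      (∏ j ∈ Ioc 0 t, (1 - (X : PowerSeries α) ^ (6*j))⁻¹) = 1 := by
    rw [← Finset.prod_mul_distrib]
    apply Finset.prod_eq_one
    intro j hj
    apply PowerSeries.mul_inv_cancel
    rw [map_sub, map_pow, constantCoeff_X, zero_pow (by have := (mem_Ioc.mp hj).1; positivity),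
      map_one, sub_zero]
    exact one_ne_zero
  calc (∏ i ∈ Ioc 0 t, (1 - (X:PowerSeries α)^(6*i))) * (∏ i ∈ Ioc t (2*t), (1 - (X:PowerSeries α)^(6*i))) *
        ((∏ i ∈ Ioc 0 (2*t), (1 - (X:PowerSeries α)^(2*i))⁻¹) *
          ((∏ j ∈ Ioc 0 t, (1 - (X:PowerSeries α)^(6*j))⁻¹) *
            (∏ i ∈ (Ioc 0 (2*t)).filter (fun j => ¬ 2 ∣ j), (1 - (X:PowerSeries α)^(3*i))⁻¹)))
      = ((∏ i ∈ Ioc 0 t, (1 - (X:PowerSeries α)^(6*i))) * (∏ j ∈ Ioc 0 t, (1 - (X:PowerSeries α)^(6*j))⁻¹)) *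
        (((∏ i ∈ Ioc 0 (2*t), (1 - (X:PowerSeries α)^(2*i))⁻¹) *
          (∏ i ∈ (Ioc 0 (2*t)).filter (fun j => ¬ 2 ∣ j), (1 - (X:PowerSeries α)^(3*i))⁻¹)) *
          (∏ i ∈ Ioc t (2*t), (1 - (X:PowerSeries α)^(6*i)))) := by ring
    _ = _ := by rw [hcancel, one_mul]
/-- the finset of allowed part sizes (divisible by 2, or odd multiples of 3) -/
def Tset (m : ℕ) : Finset ℕ :=
  (Ioc 0 m).image (fun j => 2*j) ∪ ((Ioc 0 m).filter (fun j => ¬ 2 ∣ j)).image (fun j => 3*j)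

lemma Tset_pos {m : ℕ} : ∀ i ∈ Tset m, 0 < i := by
  intro i hi
  simp only [Tset, mem_union, mem_image, mem_filter, mem_Ioc] at hi
  rcases hi with ⟨j, hj, rfl⟩ | ⟨j, hj, rfl⟩ <;> omega

lemma mem_Tset {n : ℕ} (k : ℕ) (hk0 : 0 < k) (hkn : k ≤ n) :
    k ∈ Tset (2*(n+1)) ↔ (k % 6 ≠ 1 ∧ k % 6 ≠ 5) := by
  simp only [Tset, mem_union, mem_image, mem_filter, mem_Ioc]
  constructor
  · rintro (⟨j, hj, rfl⟩ | ⟨j, ⟨hj, h2⟩, rfl⟩)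
    · omega
    · omega
  · intro h
    by_cases h2 : 2 ∣ k
    · exact Or.inl ⟨k/2, by omega, by omega⟩
    · refine Or.inr ⟨k/3, ⟨⟨by omega, by omega⟩, by omega⟩, by omega⟩

theorem prod_Tset [Field α] (m : ℕ) :
    (∏ i ∈ Tset m, (1 - (X : PowerSeries α) ^ i)⁻¹) =
      (∏ i ∈ Ioc 0 m, (1 - (X : PowerSeries α) ^ (2*i))⁻¹) *
        (∏ i ∈ (Ioc 0 m).filter (fun j => ¬ 2 ∣ j), (1 - (X : PowerSeries α) ^ (3*i))⁻¹) := by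
  rw [Tset, Finset.prod_union, Finset.prod_image, Finset.prod_image]
  · intro a _ b _ h; simp only at h; omega
  · intro a _ b _ h; simp only at h; omega
  · rw [Finset.disjoint_left]
    rintro a ha hb
    simp only [mem_image, mem_filter, mem_Ioc] at ha hb
    obtain ⟨j, _, rfl⟩ := ha
    obtain ⟨c, ⟨_, hc⟩, hcc⟩ := hb
    omega
lemma parts_le {n : ℕ} (p : Nat.Partition n) {k : ℕ} (hk : k ∈ p.parts) : k ≤ n := by
  simpa [p.parts_sum] using Multiset.single_le_sum (fun _ _ => Nat.zero_le _) _ hk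

theorem coeff_eq_mac (n : ℕ) :
    (coeff n) (∏ i ∈ Ioc 0 (2*(n+1)), indicatorSeries ℚ ((· * i) '' C2))
      = (coeff n) (∏ i ∈ Tset (2*(n+1)), (1 - (X : PowerSeries ℚ) ^ i)⁻¹) := by
  rw [same_gf_mac (n+1), prod_Tset]
  apply coeff_mul_prod_one_sub_of_lt_order
  intro i hi
  rw [order_X_pow]
  rw [mem_Ioc] at hi
  exact_mod_cast (by omega : n < 6*i)

theorem count_mult (n : ℕ) :
    (((Finset.univ : Finset (Nat.Partition n)).filter
        (fun p => ∀ k ∈ p.parts, 2 ≤ p.parts.count k)).card : ℚ)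
      = (coeff n) (∏ i ∈ Ioc 0 (2*(n+1)), indicatorSeries ℚ ((· * i) '' C2)) := by
  convert partialGF_prop ℚ n (Ioc 0 (2*(n+1))) (fun i hi => (mem_Ioc.mp hi).1) (fun _ => C2)
    (fun _ _ => Or.inl rfl) using 2
  · rfl
  congr 1
  ext p
  simp only [Finset.mem_filter, Finset.mem_univ, true_and]
  constructor
  · intro h
    refine ⟨fun j => ?_, fun j hj => ?_⟩
    · rw [mem_C2]
      by_cases hj : j ∈ p.parts
      · have := h j hj; omega
      · rw [Multiset.count_eq_zero_of_notMem hj]; omega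
    · rw [mem_Ioc]
      exact ⟨p.parts_pos hj, by have := parts_le p hj; omega⟩
  · rintro ⟨h1, -⟩ k hk
    have := (mem_C2 _).mp (h1 k)
    have hne : p.parts.count k ≠ 0 := by
      rw [Multiset.count_ne_zero]; exact hk
    omega

theorem count_mod6 (n : ℕ) :
    (((Finset.univ : Finset (Nat.Partition n)).filter
        (fun p => ∀ k ∈ p.parts, k % 6 ≠ 1 ∧ k % 6 ≠ 5)).card : ℚ)
      = (coeff n) (∏ i ∈ Tset (2*(n+1)), (1 - (X : PowerSeries ℚ) ^ i)⁻¹) := by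
  convert partialGF_prop ℚ n (Tset (2*(n+1))) Tset_pos (fun _ => Set.univ)
    (fun _ _ => trivial) using 2
  · rfl
  · congr 1
    ext p
    simp only [Finset.mem_filter, Finset.mem_univ, true_and]
    constructor
    · intro h
      refine ⟨fun _ => trivial, fun j hj => ?_⟩
      exact (mem_Tset j (p.parts_pos hj) (parts_le p hj)).mpr (h j hj)
    · rintro ⟨-, h2⟩ k hk
      exact (mem_Tset k (p.parts_pos hk) (parts_le p hk)).mp (h2 k hk)
  · apply Finset.prod_congr rfl
    intro i hi
    obtain ⟨j, rfl⟩ : ∃ j, i = j + 1 := ⟨i - 1, by have := Tset_pos i hi; omega⟩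
    have himg : ((fun x => x * (j + 1)) '' Set.univ) = {k | j + 1 ∣ k} := by
      ext k
      simp only [Set.mem_image, Set.mem_univ, true_and, Set.mem_setOf_eq]
      constructor
      · rintro ⟨a, rfl⟩
        exact Dvd.intro_left a rfl
      · rintro ⟨a, rfl⟩
        exact ⟨a, mul_comm _ _⟩
    rw [himg, num_series']

end MacMahonAux

/-- MacMahon's theorem: the number of partitions of `n` into parts not congruent to
`1` or `5` mod `6` equals the number of partitions of `n` in which every part size
that occurs has multiplicity at least `2`. -/
theorem macmahon (n : ℕ) :
    ((Finset.univ : Finset (Nat.Partition n)).filter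
        (fun p => ∀ k ∈ p.parts, k % 6 ≠ 1 ∧ k % 6 ≠ 5)).card =
      ((Finset.univ : Finset (Nat.Partition n)).filter
        (fun p => ∀ k ∈ p.parts, 2 ≤ p.parts.count k)).card := by
  suffices h : (((Finset.univ : Finset (Nat.Partition n)).filter
        (fun p => ∀ k ∈ p.parts, k % 6 ≠ 1 ∧ k % 6 ≠ 5)).card : ℚ) =
      ((Finset.univ : Finset (Nat.Partition n)).filter
        (fun p => ∀ k ∈ p.parts, 2 ≤ p.parts.count k)).card from mod_cast h
  rw [count_mod6, count_mult, coeff_eq_mac]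
end

section
/- In the formal power series ring ℤ[[q]], the coefficient of q^{3n+2} in the product ( ∏_{k=1}^∞ (1 + q^{3k}) / (1 − q^{6k}) ) · ( ∑_{m=0}^∞ q^{m(m+1)/2} ) is zero for every natural number n. -/
/- The product topology on `ℤ⟦X⟧ = (Unit →₀ ℕ) → ℤ` (with `ℤ` discrete), i.e. the topology
of coefficientwise convergence, in which the infinite product and sum below converge. -/
instance : TopologicalSpace (PowerSeries ℤ) :=
  inferInstanceAs (TopologicalSpace ((Unit →₀ ℕ) → ℤ))

open PowerSeries

instance : T2Space (PowerSeries ℤ) :=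
  inferInstanceAs (T2Space ((Unit →₀ ℕ) → ℤ))

lemma cont_coeff' (d : ℕ) : Continuous (fun f : PowerSeries ℤ => coeff (R := ℤ) d f) :=
  continuous_apply _

/-- limits of products stay in a closed submonoid-like set -/
lemma tprod_mem_closed {C : Set (PowerSeries ℤ)} (hC : IsClosed C) (h1 : (1 : PowerSeries ℤ) ∈ C)
    (hmul : ∀ f g, f ∈ C → g ∈ C → f * g ∈ C) (f : ℕ → PowerSeries ℤ) (hf : ∀ i, f i ∈ C) :
    (∏' i, f i) ∈ C := by
  by_cases h : Multipliable f
  · obtain ⟨a, ha⟩ := h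
    rw [ha.tprod_eq]
    refine hC.mem_of_tendsto ha (Filter.Eventually.of_forall fun s => ?_)
    exact Finset.prod_induction f (· ∈ C) (fun a b => hmul a b) h1 fun i _ => hf i
  · rw [tprod_eq_one_of_not_multipliable h]; exact h1

lemma tsum_mem_closed {C : Set (PowerSeries ℤ)} (hC : IsClosed C) (h0 : (0 : PowerSeries ℤ) ∈ C)
    (hadd : ∀ f g, f ∈ C → g ∈ C → f + g ∈ C) (f : ℕ → PowerSeries ℤ) (hf : ∀ i, f i ∈ C) :
    (∑' i, f i) ∈ C := by
  by_cases h : Summable f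
  · obtain ⟨a, ha⟩ := h
    rw [ha.tsum_eq]
    refine hC.mem_of_tendsto ha (Filter.Eventually.of_forall fun s => ?_)
    exact Finset.sum_induction f (· ∈ C) (fun a b => hadd a b) h0 fun i _ => hf i
  · rw [tsum_eq_zero_of_not_summable h]; exact h0

/-- The geometric series `∑ X^(e*j)`. -/
noncomputable def geom (e : ℕ) : PowerSeries ℤ := PowerSeries.mk fun d => if e ∣ d then 1 else 0

lemma one_sub_pow_mul_geom (e : ℕ) (he : 0 < e) :
    (1 - (X : PowerSeries ℤ) ^ e) * geom e = 1 := by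
  ext d
  rw [sub_mul, one_mul, map_sub, mul_comm ((X : PowerSeries ℤ) ^ e), coeff_mul_X_pow',
    coeff_one, geom, coeff_mk]
  by_cases hd0 : d = 0
  · subst hd0
    rw [if_pos rfl, if_pos (dvd_zero e), if_neg (by omega), sub_zero]
  · rw [if_neg hd0]
    by_cases hle : e ≤ d
    · rw [if_pos hle, coeff_mk]
      by_cases hdvd : e ∣ d
      · rw [if_pos hdvd, if_pos (Nat.dvd_sub hdvd dvd_rfl), sub_self]
      · rw [if_neg hdvd, if_neg fun hc => hdvd (by
          have h2 : e ∣ d - e + e := Nat.dvd_add hc dvd_rfl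
          rwa [Nat.sub_add_cancel hle] at h2), sub_zero]
    · rw [if_neg hle, if_neg fun hc => hle (Nat.le_of_dvd (by omega) hc), sub_zero]

lemma inverse_one_sub_pow (e : ℕ) (he : 0 < e) :
    Ring.inverse (1 - (X : PowerSeries ℤ) ^ e) = geom e := by
  have hmul := one_sub_pow_mul_geom e he
  have hu : IsUnit (1 - (X : PowerSeries ℤ) ^ e) := IsUnit.of_mul_eq_one _ hmul
  calc Ring.inverse (1 - (X : PowerSeries ℤ) ^ e)
      = Ring.inverse (1 - (X : PowerSeries ℤ) ^ e) * ((1 - (X : PowerSeries ℤ) ^ e) * geom e) := by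
        rw [hmul, mul_one]
    _ = geom e := by rw [← mul_assoc, Ring.inverse_mul_cancel _ hu, one_mul]

/-- The set of series supported on exponents divisible by 3. -/
def P3 : Set (PowerSeries ℤ) := {f | ∀ d : ℕ, ¬ (3 ∣ d) → coeff (R := ℤ) d f = 0}

lemma isClosed_P3 : IsClosed P3 := by
  have : P3 = ⋂ d ∈ {d : ℕ | ¬ (3 ∣ d)}, {f : PowerSeries ℤ | coeff (R := ℤ) d f = 0} := by
    ext f; simp [P3]
  rw [this]
  exact isClosed_biInter fun d _ => isClosed_eq (cont_coeff' d) continuous_const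

lemma one_mem_P3 : (1 : PowerSeries ℤ) ∈ P3 := by
  intro d hd
  rw [coeff_one, if_neg]
  omega

lemma mul_mem_P3 {f g : PowerSeries ℤ} (hf : f ∈ P3) (hg : g ∈ P3) : f * g ∈ P3 := by
  intro d hd
  rw [coeff_mul]
  refine Finset.sum_eq_zero fun p hp => ?_
  rw [Finset.HasAntidiagonal.mem_antidiagonal] at hp
  by_cases h1 : 3 ∣ p.1
  · rw [hg p.2 (by omega), mul_zero]
  · rw [hf p.1 h1, zero_mul]

lemma geom_mem_P3 {e : ℕ} (he : 3 ∣ e) : geom e ∈ P3 := by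
  intro d hd
  rw [geom, coeff_mk, if_neg]
  intro hc
  exact hd (he.trans hc)

lemma factor_mem_P3 (k : ℕ) :
    (1 + (X : PowerSeries ℤ) ^ (3 * (k + 1))) *
      Ring.inverse (1 - (X : PowerSeries ℤ) ^ (6 * (k + 1))) ∈ P3 := by
  refine mul_mem_P3 ?_ ?_
  · intro d hd
    rw [map_add, coeff_one, coeff_X_pow, if_neg, if_neg]
    · omega
    · intro h; exact hd ⟨k + 1, h⟩
    · omega
  · rw [inverse_one_sub_pow _ (by omega)]
    exact geom_mem_P3 ⟨2 * (k + 1), by ring⟩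

lemma tri_mod (m : ℕ) : m * (m + 1) / 2 % 3 ≠ 2 := by
  have h : m * (m + 1) % 6 = 0 ∨ m * (m + 1) % 6 = 2 := by
    induction m using Nat.strong_induction_on with
    | _ m ih =>
      match m, ih with
      | 0, _ => left; rfl
      | 1, _ => right; rfl
      | 2, _ => left; rfl
      | 3, _ => left; rfl
      | 4, _ => right; rfl
      | 5, _ => left; rfl
      | (k + 6), ih =>
        have h := ih k (by omega)
        have heq : (k + 6) * (k + 6 + 1) = k * (k + 1) + 6 * (2 * k + 7) := by ring
        rw [heq]
        generalize k * (k + 1) = t at h ⊢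
        omega
  omega

/-- The coefficient of `q^(3n+2)` in `(∏_{k=1}^∞ (1 + q^{3k})/(1 - q^{6k})) · ∑_{m≥0} q^{m(m+1)/2}`
(in `ℤ⟦q⟧`, where `(1 - q^{6k})⁻¹` is the inverse of the unit `1 - q^{6k}`) vanishes. -/
theorem coeff_three_n_add_two_eq_zero (n : ℕ) :
    PowerSeries.coeff (R := ℤ) (3 * n + 2)
      ((∏' k : ℕ, (1 + (X : PowerSeries ℤ) ^ (3 * (k + 1))) *
          Ring.inverse (1 - (X : PowerSeries ℤ) ^ (6 * (k + 1)))) *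
        ∑' m : ℕ, (X : PowerSeries ℤ) ^ (m * (m + 1) / 2)) = 0 := by
  have hP : (∏' k : ℕ, (1 + (X : PowerSeries ℤ) ^ (3 * (k + 1))) *
      Ring.inverse (1 - (X : PowerSeries ℤ) ^ (6 * (k + 1)))) ∈ P3 :=
    tprod_mem_closed isClosed_P3 one_mem_P3 (fun _ _ => mul_mem_P3) _ factor_mem_P3
  have hQ : ∀ d : ℕ, d % 3 = 2 →
      coeff (R := ℤ) d (∑' m : ℕ, (X : PowerSeries ℤ) ^ (m * (m + 1) / 2)) = 0 := by
    intro d hd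
    have hclosed : IsClosed {f : PowerSeries ℤ | coeff (R := ℤ) d f = 0} :=
      isClosed_eq (cont_coeff' d) continuous_const
    refine tsum_mem_closed hclosed (by simp) (fun f g hf hg => ?_) _ (fun m => ?_)
    · simp only [Set.mem_setOf_eq] at hf hg ⊢
      rw [map_add, hf, hg, add_zero]
    · simp only [Set.mem_setOf_eq, coeff_X_pow]
      rw [if_neg]
      intro hc
      exact tri_mod m (by omega)
  rw [coeff_mul]
  refine Finset.sum_eq_zero fun p hp => ?_
  rw [Finset.HasAntidiagonal.mem_antidiagonal] at hp
  by_cases h1 : 3 ∣ p.1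
  · rw [hQ p.2 (by omega), mul_zero]
  · rw [hP p.1 h1, zero_mul]
end
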